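/- Let n be a positive integer, let x, y_1, …, y_n be vectors in H, and let p > 1 and q satisfy 1/p + 1/q = 1. Then (∑_{i=1}^n |(x, y_i)|^2)^2 ≤ ‖x‖^2 · (∑_{i=1}^n |(x, y_i)|^p)^{1/p} · (∑_{i=1}^n |(x, y_i)|^q)^{1/q} · max_{1≤i≤n} (∑_{j=1}^n |(y_i, y_j)|). -/

import Mathlib

/-!
Write `aᵢ = |(x, yᵢ)|` and `z = ∑ conj (x, yᵢ) yᵢ`. Then `(x, z) = ∑ aᵢ²`, so Cauchy–Schwarz gives
`(∑ aᵢ²)² ≤ ‖x‖² ‖z‖²`, and expanding `‖z‖²` bounds it by `∑ᵢⱼ |(yᵢ, yⱼ)| aᵢ aⱼ`. Hölder's inequality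
for the weights `|(yᵢ, yⱼ)|` on pairs `(i, j)` (the Schur test) bounds this bilinear form by
`(R ∑ aᵢ^p)^(1/p) (C ∑ aⱼ^q)^(1/q)`, where `R` and `C` bound the row and column sums of the weights;
the moduli of the Gram matrix are symmetric, so `R = C = max_i ∑_j |(yᵢ, yⱼ)|` will do.
-/

open Finset RCLike
open scoped InnerProductSpace ComplexConjugate

namespace Real

theorem rpow_one_div_mul_rpow {w f : ℝ} (hw : 0 ≤ w) (hf : 0 ≤ f) {p : ℝ} (hp : p ≠ 0) :
    (w ^ (1 / p) * f) ^ p = w * f ^ p := by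
  rw [mul_rpow (rpow_nonneg hw _) hf, ← rpow_mul hw, one_div_mul_cancel hp, rpow_one]

theorem inner_le_weighted_Lp_mul_Lq_of_nonneg {ι : Type*} (s : Finset ι) {p q : ℝ}
    (hpq : p.HolderConjugate q) {w f g : ι → ℝ} (hw : ∀ i ∈ s, 0 ≤ w i)
    (hf : ∀ i ∈ s, 0 ≤ f i) (hg : ∀ i ∈ s, 0 ≤ g i) :
    ∑ i ∈ s, w i * f i * g i ≤
      (∑ i ∈ s, w i * f i ^ p) ^ (1 / p) * (∑ i ∈ s, w i * g i ^ q) ^ (1 / q) := by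
  have split : ∀ i ∈ s, w i * f i * g i = (w i ^ (1 / p) * f i) * (w i ^ (1 / q) * g i) := by
    intro i hi
    rw [mul_mul_mul_comm, ← rpow_add' (hw i hi) (by simp [hpq.inv_add_inv_eq_one]),
      hpq.one_div_add_one_div, div_one, rpow_one, mul_assoc]
  have holder := inner_le_Lp_mul_Lq_of_nonneg s hpq
    (fun i hi => mul_nonneg (rpow_nonneg (hw i hi) (1 / p)) (hf i hi))
    (fun i hi => mul_nonneg (rpow_nonneg (hw i hi) (1 / q)) (hg i hi))
  rwa [← sum_congr rfl split,
    sum_congr rfl fun i hi => rpow_one_div_mul_rpow (hw i hi) (hf i hi) hpq.ne_zero,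
    sum_congr rfl fun i hi => rpow_one_div_mul_rpow (hw i hi) (hg i hi) hpq.symm.ne_zero] at holder

end Real

theorem sum_sum_mul_le_of_row_col_sum_le {ι κ : Type*} [Fintype ι] [Fintype κ] {p q : ℝ}
    (hpq : p.HolderConjugate q) {b : ι → κ → ℝ} {a : ι → ℝ} {c : κ → ℝ}
    (hb : ∀ i j, 0 ≤ b i j) (ha : ∀ i, 0 ≤ a i) (hc : ∀ j, 0 ≤ c j) {R C : ℝ}
    (hR : ∀ i, ∑ j, b i j ≤ R) (hC : ∀ j, ∑ i, b i j ≤ C) :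
    ∑ i, ∑ j, b i j * a i * c j ≤
      (R * ∑ i, a i ^ p) ^ (1 / p) * (C * ∑ j, c j ^ q) ^ (1 / q) := by
  have holder := Real.inner_le_weighted_Lp_mul_Lq_of_nonneg univ hpq
    (w := fun ij : ι × κ => b ij.1 ij.2) (f := fun ij => a ij.1) (g := fun ij => c ij.2)
    (fun ij _ => hb _ _) (fun ij _ => ha _) (fun ij _ => hc _)
  simp only [← univ_product_univ, sum_product] at holder
  have hrow_nonneg : 0 ≤ ∑ i, ∑ j, b i j * a i ^ p :=
    sum_nonneg fun i _ => sum_nonneg fun j _ => mul_nonneg (hb i j) (Real.rpow_nonneg (ha i) _)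
  have hcol_nonneg : 0 ≤ ∑ i, ∑ j, b i j * c j ^ q :=
    sum_nonneg fun i _ => sum_nonneg fun j _ => mul_nonneg (hb i j) (Real.rpow_nonneg (hc j) _)
  have hrow : ∑ i, ∑ j, b i j * a i ^ p ≤ R * ∑ i, a i ^ p := by
    simp_rw [← sum_mul, mul_sum]
    exact sum_le_sum fun i _ => mul_le_mul_of_nonneg_right (hR i) (Real.rpow_nonneg (ha i) _)
  have hcol : ∑ i, ∑ j, b i j * c j ^ q ≤ C * ∑ j, c j ^ q := by
    rw [sum_comm]
    simp_rw [← sum_mul, mul_sum]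
    exact sum_le_sum fun j _ => mul_le_mul_of_nonneg_right (hC j) (Real.rpow_nonneg (hc j) _)
  exact holder.trans <| mul_le_mul (Real.rpow_le_rpow hrow_nonneg hrow hpq.one_div_nonneg)
    (Real.rpow_le_rpow hcol_nonneg hcol hpq.symm.one_div_nonneg) (Real.rpow_nonneg hcol_nonneg _)
    (Real.rpow_nonneg (hrow_nonneg.trans hrow) _)

section InnerProductSpace

variable {𝕜 E ι : Type*} [RCLike 𝕜] [NormedAddCommGroup E] [InnerProductSpace 𝕜 E] [Fintype ι]

theorem norm_sum_smul_sq_le (c : ι → 𝕜) (y : ι → E) :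
    ‖∑ i, c i • y i‖ ^ 2 ≤ ∑ i, ∑ j, ‖⟪y i, y j⟫_𝕜‖ * ‖c i‖ * ‖c j‖ :=
  calc ‖∑ i, c i • y i‖ ^ 2 = re ⟪∑ i, c i • y i, ∑ j, c j • y j⟫_𝕜 := norm_sq_eq_re_inner _
    _ ≤ ‖⟪∑ i, c i • y i, ∑ j, c j • y j⟫_𝕜‖ := re_le_norm _
    _ = ‖∑ i, ∑ j, ⟪y i, y j⟫_𝕜 * conj (c i) * c j‖ := by
      simp only [sum_inner, inner_sum, inner_smul_left, inner_smul_right, mul_sum]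
      rw [sum_comm]
      congr 1
      exact sum_congr rfl fun i _ => sum_congr rfl fun j _ => by ring
    _ ≤ ∑ i, ∑ j, ‖⟪y i, y j⟫_𝕜 * conj (c i) * c j‖ :=
      (norm_sum_le _ _).trans (sum_le_sum fun i _ => norm_sum_le _ _)
    _ = ∑ i, ∑ j, ‖⟪y i, y j⟫_𝕜‖ * ‖c i‖ * ‖c j‖ := by simp only [norm_mul, norm_conj]

theorem sum_norm_inner_sq_sq_le (x : E) (y : ι → E) :
    (∑ i, ‖⟪x, y i⟫_𝕜‖ ^ 2) ^ 2 ≤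
      ‖x‖ ^ 2 * ∑ i, ∑ j, ‖⟪y i, y j⟫_𝕜‖ * ‖⟪x, y i⟫_𝕜‖ * ‖⟪x, y j⟫_𝕜‖ := by
  set z := ∑ i, conj ⟪x, y i⟫_𝕜 • y i
  have hxz : re ⟪x, z⟫_𝕜 = ∑ i, ‖⟪x, y i⟫_𝕜‖ ^ 2 := by
    simp only [z, inner_sum, inner_smul_right, RCLike.conj_mul, map_sum, ← ofReal_pow, ofReal_re]
  have hz := norm_sum_smul_sq_le (fun i => conj ⟪x, y i⟫_𝕜) y
  simp only [norm_conj] at hz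
  calc (∑ i, ‖⟪x, y i⟫_𝕜‖ ^ 2) ^ 2 ≤ (‖x‖ * ‖z‖) ^ 2 :=
        pow_le_pow_left₀ (sum_nonneg fun i _ => sq_nonneg _) (hxz ▸ re_inner_le_norm x z) 2
    _ = ‖x‖ ^ 2 * ‖z‖ ^ 2 := mul_pow _ _ _
    _ ≤ _ := by gcongr

end InnerProductSpace

theorem stmt_19 {H : Type*} [NormedAddCommGroup H] [InnerProductSpace ℂ H]
    {n : ℕ} (hn : 0 < n) (x : H) (y : Fin n → H) (p q : ℝ) (hp : 1 < p) (hpq : 1 / p + 1 / q = 1) :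
    (∑ i, (‖(inner ℂ x (y i) : ℂ)‖) ^ 2) ^ 2 ≤ ‖x‖ ^ 2 * (∑ i, (‖(inner ℂ x (y i) : ℂ)‖) ^ p) ^ (1 / p) * (∑ i, (‖(inner ℂ x (y i) : ℂ)‖) ^ q) ^ (1 / q) * (Finset.univ.sup' (Finset.univ_nonempty_iff.mpr (Fin.pos_iff_nonempty.mp hn)) (fun i => (∑ j, ‖(inner ℂ (y i) (y j) : ℂ)‖))) := by
  have hpq' : p.HolderConjugate q :=
    Real.holderConjugate_iff.mpr ⟨hp, by simpa only [one_div] using hpq⟩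
  set M := univ.sup' _ fun i => ∑ j, ‖⟪y i, y j⟫_ℂ‖
  have hrow : ∀ i, ∑ j, ‖⟪y i, y j⟫_ℂ‖ ≤ M := fun i =>
    le_sup' (fun i => ∑ j, ‖⟪y i, y j⟫_ℂ‖) (mem_univ i)
  have hcol : ∀ j, ∑ i, ‖⟪y i, y j⟫_ℂ‖ ≤ M := fun j => by simpa only [norm_inner_symm] using hrow j
  have hM : 0 ≤ M := (sum_nonneg fun j _ => norm_nonneg _).trans (hrow ⟨0, hn⟩)
  set A := ∑ i, ‖⟪x, y i⟫_ℂ‖ ^ p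
  set B := ∑ i, ‖⟪x, y i⟫_ℂ‖ ^ q
  have hA : 0 ≤ A := sum_nonneg fun i _ => Real.rpow_nonneg (norm_nonneg _) _
  have hB : 0 ≤ B := sum_nonneg fun i _ => Real.rpow_nonneg (norm_nonneg _) _
  calc _ ≤ ‖x‖ ^ 2 * ∑ i, ∑ j, ‖⟪y i, y j⟫_ℂ‖ * ‖⟪x, y i⟫_ℂ‖ * ‖⟪x, y j⟫_ℂ‖ :=
        sum_norm_inner_sq_sq_le x y
    _ ≤ ‖x‖ ^ 2 * ((M * A) ^ (1 / p) * (M * B) ^ (1 / q)) := by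
        gcongr
        exact sum_sum_mul_le_of_row_col_sum_le hpq' (fun i j => norm_nonneg _)
          (fun i => norm_nonneg _) (fun j => norm_nonneg _) hrow hcol
    _ = ‖x‖ ^ 2 * A ^ (1 / p) * B ^ (1 / q) * M := by
        rw [Real.mul_rpow hM hA, Real.mul_rpow hM hB, mul_mul_mul_comm,
          ← Real.rpow_add' hM (by rw [hpq]; exact one_ne_zero), hpq, Real.rpow_one]
        ring
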